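/- arXiv:2108.07043 — 2 statements merged into one kernel-verified Lean document; each statement's English description precedes it below -/
import Mathlib

section
/- There exist vectors $a, h \in \mathbb{R}^2$ with $|a| = 1$ such that the function $\varphi(F) = (h \cdot Fa)/|Fa|$, defined on matrices $F$ with $Fa \ne 0$, is not rank-one convex: there exist $F_0 \in \mathbb{R}^{2\times 2}$ with $\det F_0 > 0$ and vectors $b,c \in \mathbb{R}^2$ such that $\lambda \mapsto \varphi(F_0 + \lambda\, b \otimes c)$ fails to be convex on some interval around $0$. -/
open scoped BigOperators

/-- Euclidean scalar product on `ℝ²` (as `Fin 2 → ℝ`). -/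
noncomputable def dot2 (u v : Fin 2 → ℝ) : ℝ := ∑ i, u i * v i

/-- Euclidean norm on `ℝ²` (as `Fin 2 → ℝ`). -/
noncomputable def nrm2 (u : Fin 2 → ℝ) : ℝ := Real.sqrt (dot2 u u)

/-- The Zeeman density `φ(F) = h·(Fa)/|Fa|` is not rank-one convex: for suitable unit
vector `a` and vector `h` there are `F₀` (with positive determinant) and a rank-one
direction `b ⊗ c` such that `λ ↦ φ(F₀ + λ b⊗c)` fails to be convex on an interval
around `0` (on which `(F₀ + λ b⊗c) a ≠ 0`, so `φ` is well defined). -/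
theorem zeeman_not_rank_one_convex :
    ∃ a h : Fin 2 → ℝ, nrm2 a = 1 ∧
      ∃ (F₀ : Matrix (Fin 2) (Fin 2) ℝ) (b c : Fin 2 → ℝ) (δ : ℝ), 0 < δ ∧ 0 < F₀.det ∧
        (∀ l ∈ Set.Ioo (-δ) δ, (F₀ + l • Matrix.vecMulVec b c).mulVec a ≠ 0) ∧
        ¬ ConvexOn ℝ (Set.Ioo (-δ) δ)
          (fun l => dot2 h ((F₀ + l • Matrix.vecMulVec b c).mulVec a) /
            nrm2 ((F₀ + l • Matrix.vecMulVec b c).mulVec a)) := by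
  refine ⟨![1,0], ![0,1], ?_, 1, ![0,1], ![1,0], 1, one_pos, ?_, ?_, ?_⟩
  · simp [nrm2, dot2, Fin.sum_univ_two]
  · simp
  · intro l hl hv
    have := congrFun hv 0
    simp [Matrix.mulVec, Matrix.vecMulVec, Matrix.one_apply, Fin.sum_univ_two,
      dotProduct] at this
  · have hv : ∀ l : ℝ, ((1 : Matrix (Fin 2) (Fin 2) ℝ) + l • Matrix.vecMulVec ![0,1] ![1,0]).mulVec ![1,0] = ![1, l] := by
      intro l
      funext i
      fin_cases i <;>
        simp [Matrix.mulVec, Matrix.vecMulVec, Matrix.one_apply, Fin.sum_univ_two,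
          dotProduct]
    have hf : ∀ l : ℝ, dot2 ![0,1] (((1 : Matrix (Fin 2) (Fin 2) ℝ) + l • Matrix.vecMulVec ![0,1] ![1,0]).mulVec ![1,0]) /
        nrm2 (((1 : Matrix (Fin 2) (Fin 2) ℝ) + l • Matrix.vecMulVec ![0,1] ![1,0]).mulVec ![1,0])
        = l / Real.sqrt (1 + l * l) := by
      intro l
      rw [hv l]
      simp [dot2, nrm2, Fin.sum_univ_two]
    intro hconv
    have h0 : (0:ℝ) ∈ Set.Ioo (-1:ℝ) 1 := by norm_num
    have h2 : (1/2:ℝ) ∈ Set.Ioo (-1:ℝ) 1 := by norm_num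
    have key := hconv.2 h0 h2 (by norm_num : (0:ℝ) ≤ 1/2) (by norm_num : (0:ℝ) ≤ 1/2) (by norm_num)
    have e : (1/2 : ℝ) • (0:ℝ) + (1/2:ℝ) • (1/2:ℝ) = 1/4 := by norm_num
    simp only [e, hf] at key
    -- key : 1/4 / √(1+1/16) ≤ 1/2 • (0/√1) + 1/2 • ((1/2)/√(1+1/4))
    have hs : Real.sqrt (1 + (1/4:ℝ) * (1/4)) < Real.sqrt (1 + (1/2:ℝ) * (1/2)) := by
      apply Real.sqrt_lt_sqrt <;> norm_num
    have hsp : 0 < Real.sqrt (1 + (1/4:ℝ) * (1/4)) := Real.sqrt_pos.2 (by norm_num)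
    have htp : 0 < Real.sqrt (1 + (1/2:ℝ) * (1/2)) := Real.sqrt_pos.2 (by norm_num)
    have : (1/4:ℝ) / Real.sqrt (1 + (1/4:ℝ)*(1/4)) > (1/2:ℝ) • ((0:ℝ)/Real.sqrt (1+(0:ℝ)*0)) + (1/2:ℝ) • ((1/2:ℝ)/Real.sqrt (1+(1/2:ℝ)*(1/2))) := by
      simp only [smul_eq_mul, zero_div, mul_zero, zero_add]
      rw [show (1/2:ℝ)*(1/2/Real.sqrt (1+(1/2:ℝ)*(1/2))) = (1/4)/Real.sqrt (1+(1/2:ℝ)*(1/2)) from by ring]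
      rw [gt_iff_lt, div_lt_div_iff₀ htp hsp]
      nlinarith
    linarith
end

section
/- Let $p > 2$ and $q \ge 2p/(p-2)$, and let $z \in W^{2,p}((0,\ell);\mathbb{R}^2)$, $b \in W^{1,p}((0,\ell);\mathbb{R}^2)$ satisfy $\det(z'|b) > 0$ a.e. and $\int_0^\ell (\det(z'|b))^{-q}\,dx_1 < +\infty$. Then there exists $\varepsilon > 0$ such that $\det(z'(x_1)|b(x_1)) \ge \varepsilon$ for all $x_1 \in [0,\ell]$. -/
open MeasureTheory Set Filter Topology Asymptotics

/-!
If `f` is differentiable on `[a, b]` and its minimum `f x₀` were `≤ 0`, then `f x ≤ C |x - x₀|`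
near `x₀`. Where `f > 0` this gives `f x ^ (-q) ≥ C ^ (-q) |x - x₀| ^ (-q)`, which is not
integrable near `x₀` once `q ≥ 1`.
-/

theorem not_integrableOn_Ioo_abs_sub_rpow_neg {a b x₀ s : ℝ} (hab : a < b) (hx₀ : x₀ ∈ Icc a b)
    (hs : 1 ≤ s) : ¬ IntegrableOn (fun x => |x - x₀| ^ (-s)) (Ioo a b) := by
  rw [← intervalIntegrable_iff_integrableOn_Ioo_of_le hab.le]
  refine not_intervalIntegrable_of_sub_inv_isBigO_punctured (IsBigO.of_bound 1 ?_) hab.ne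
    (by rwa [uIcc_of_le hab.le])
  filter_upwards [self_mem_nhdsWithin,
    nhdsWithin_le_nhds (Metric.closedBall_mem_nhds x₀ one_pos)] with x hne hx
  have hpos : 0 < |x - x₀| := abs_pos.2 (sub_ne_zero.2 hne)
  rw [Metric.mem_closedBall, Real.dist_eq] at hx
  rw [one_mul, norm_inv, Real.norm_eq_abs, Real.norm_eq_abs,
    abs_of_pos (Real.rpow_pos_of_pos hpos _), ← Real.rpow_neg_one]
  exact Real.rpow_le_rpow_of_exponent_ge hpos hx (neg_le_neg hs)

theorem DifferentiableAt.exists_eventually_le_mul_abs_sub {f : ℝ → ℝ} {x₀ : ℝ}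
    (hf : DifferentiableAt ℝ f x₀) (hx₀ : f x₀ ≤ 0) :
    ∃ C > 0, ∀ᶠ x in 𝓝 x₀, f x ≤ C * |x - x₀| := by
  obtain ⟨C, hC, hbound⟩ := hf.isBigO_sub.exists_pos
  refine ⟨C, hC, hbound.bound.mono fun x hx => ?_⟩
  rw [Real.norm_eq_abs, Real.norm_eq_abs] at hx
  linarith [le_abs_self (f x - f x₀)]

theorem not_integrableOn_rpow_neg_of_le_mul_abs_sub {f : ℝ → ℝ} {a b x₀ q C : ℝ} (hab : a < b)
    (hx₀ : x₀ ∈ Icc a b) (hq : 1 ≤ q) (hC : 0 < C)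
    (hpos : ∀ᵐ x ∂volume.restrict (Ioo a b), 0 < f x)
    (hle : ∀ᶠ x in 𝓝 x₀, f x ≤ C * |x - x₀|) :
    ¬ IntegrableOn (fun x => f x ^ (-q)) (Ioo a b) := by
  obtain ⟨δ, hδ, hball⟩ := Metric.eventually_nhds_iff.1 hle
  set a' := max a (x₀ - δ)
  set b' := min b (x₀ + δ)
  have hab' : a' < b' :=
    max_lt (lt_min hab (by linarith [hx₀.1])) (lt_min (by linarith [hx₀.2]) (by linarith))
  have hx₀' : x₀ ∈ Icc a' b' := ⟨max_le hx₀.1 (by linarith), le_min hx₀.2 (by linarith)⟩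
  have hsub : Ioo a' b' ⊆ Ioo a b := Ioo_subset_Ioo (le_max_left _ _) (min_le_left _ _)
  have hnear : ∀ x ∈ Ioo a' b', dist x x₀ < δ := fun x hx => by
    rw [Real.dist_eq, abs_lt]
    constructor <;> linarith [hx.1, hx.2, le_max_right a (x₀ - δ), min_le_right b (x₀ + δ)]
  intro hint
  apply not_integrableOn_Ioo_abs_sub_rpow_neg hab' hx₀' hq
  refine ((hint.mono_set hsub).const_mul (C ^ q)).mono'
    (Measurable.aestronglyMeasurable (by fun_prop)) ?_
  filter_upwards [ae_restrict_of_ae_restrict_of_subset hsub hpos,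
    ae_restrict_mem measurableSet_Ioo] with x hfx hx
  have hxx₀ : 0 ≤ |x - x₀| := abs_nonneg _
  calc ‖|x - x₀| ^ (-q)‖ = C ^ q * (C * |x - x₀|) ^ (-q) := by
        rw [Real.norm_of_nonneg (by positivity), Real.mul_rpow hC.le hxx₀, ← mul_assoc,
          ← Real.rpow_add hC, add_neg_cancel, Real.rpow_zero, one_mul]
    _ ≤ C ^ q * f x ^ (-q) := by
        have hneg : -q ≤ 0 := by linarith
        exact mul_le_mul_of_nonneg_left
          (Real.rpow_le_rpow_of_nonpos hfx (hball (hnear x hx)) hneg) (by positivity)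

theorem exists_pos_le_of_integrableOn_rpow_neg {f : ℝ → ℝ} {a b q : ℝ} (hab : a < b)
    (hq : 1 ≤ q) (hf : ∀ x ∈ Icc a b, DifferentiableAt ℝ f x)
    (hpos : ∀ᵐ x ∂volume.restrict (Ioo a b), 0 < f x)
    (hint : IntegrableOn (fun x => f x ^ (-q)) (Ioo a b)) :
    ∃ ε > 0, ∀ x ∈ Icc a b, ε ≤ f x := by
  obtain ⟨x₀, hx₀, hmin⟩ := isCompact_Icc.exists_isMinOn (nonempty_Icc.2 hab.le)
    fun x hx => (hf x hx).continuousAt.continuousWithinAt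
  refine ⟨f x₀, ?_, fun x hx => hmin hx⟩
  by_contra! hnonpos
  obtain ⟨C, hC, hle⟩ := (hf x₀ hx₀).exists_eventually_le_mul_abs_sub hnonpos
  exact not_integrableOn_rpow_neg_of_le_mul_abs_sub hab hx₀ hq hC hpos hle hint

theorem det_columns_uniformly_positive_1d_general
    (ℓ p q : ℝ) (hℓ : 0 < ℓ) (hp : 2 < p) (hq : 2 * p / (p - 2) ≤ q)
    (z b : ℝ → ℝ × ℝ)
    -- z ∈ W^{2,p}
    (hz2 : ∀ x ∈ Set.Icc 0 ℓ, DifferentiableAt ℝ (deriv z) x)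
    -- b ∈ W^{1,p}
    (hb1 : ∀ x ∈ Set.Icc 0 ℓ, DifferentiableAt ℝ b x)
    -- det(z'|b) > 0 a.e. and the negative power is integrable
    (hdet : ∀ᵐ x ∂(volume.restrict (Set.Ioo 0 ℓ)),
      0 < (deriv z x).1 * (b x).2 - (deriv z x).2 * (b x).1)
    (hint : IntegrableOn
      (fun x => ((deriv z x).1 * (b x).2 - (deriv z x).2 * (b x).1) ^ (-q))
      (Set.Ioo 0 ℓ) volume) :
    ∃ ε > 0, ∀ x ∈ Set.Icc 0 ℓ,
      ε ≤ (deriv z x).1 * (b x).2 - (deriv z x).2 * (b x).1 := by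
  have hq1 : 1 ≤ q := by
    have : 2 ≤ 2 * p / (p - 2) := by rw [le_div_iff₀ (by linarith)]; linarith
    linarith
  refine exists_pos_le_of_integrableOn_rpow_neg hℓ hq1 (fun x hx => ?_) hdet hint
  exact ((hz2 x hx).fst.mul (hb1 x hx).snd).sub ((hz2 x hx).snd.mul (hb1 x hx).fst)

/-- One-dimensional uniform positivity of `det(z'|b)`: if `z ∈ W^{2,p}((0,ℓ);ℝ²)` and
`b ∈ W^{1,p}((0,ℓ);ℝ²)` with `p > 2`, `q ≥ 2p/(p-2)`, `det(z'|b) > 0` a.e. and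
`∫_0^ℓ (det(z'|b))^{-q} < ∞`, then `det(z'|b) ≥ ε > 0` on all of `[0,ℓ]`.
Here `det(z'(x)|b(x)) = z'₁(x) b₂(x) - z'₂(x) b₁(x)`. -/
theorem det_columns_uniformly_positive_1d
    (ℓ p q : ℝ) (hℓ : 0 < ℓ) (hp : 2 < p) (hq : 2 * p / (p - 2) ≤ q)
    (z b : ℝ → ℝ × ℝ)
    -- z ∈ W^{2,p}
    (hz1 : ∀ x ∈ Set.Icc 0 ℓ, DifferentiableAt ℝ z x)
    (hz2 : ∀ x ∈ Set.Icc 0 ℓ, DifferentiableAt ℝ (deriv z) x)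
    (hzL : MemLp z (ENNReal.ofReal p) (volume.restrict (Set.Ioo 0 ℓ)))
    (hzL1 : MemLp (deriv z) (ENNReal.ofReal p) (volume.restrict (Set.Ioo 0 ℓ)))
    (hzL2 : MemLp (deriv (deriv z)) (ENNReal.ofReal p) (volume.restrict (Set.Ioo 0 ℓ)))
    -- b ∈ W^{1,p}
    (hb1 : ∀ x ∈ Set.Icc 0 ℓ, DifferentiableAt ℝ b x)
    (hbL : MemLp b (ENNReal.ofReal p) (volume.restrict (Set.Ioo 0 ℓ)))
    (hbL1 : MemLp (deriv b) (ENNReal.ofReal p) (volume.restrict (Set.Ioo 0 ℓ)))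
    -- det(z'|b) > 0 a.e. and the negative power is integrable
    (hdet : ∀ᵐ x ∂(volume.restrict (Set.Ioo 0 ℓ)),
      0 < (deriv z x).1 * (b x).2 - (deriv z x).2 * (b x).1)
    (hint : IntegrableOn
      (fun x => ((deriv z x).1 * (b x).2 - (deriv z x).2 * (b x).1) ^ (-q))
      (Set.Ioo 0 ℓ) volume) :
    ∃ ε > 0, ∀ x ∈ Set.Icc 0 ℓ,
      ε ≤ (deriv z x).1 * (b x).2 - (deriv z x).2 * (b x).1 :=
  det_columns_uniformly_positive_1d_general ℓ p q hℓ hp hq z b hz2 hb1 hdet hint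
end
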